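/- For n ≥ 0 and integer r with |r| ≤ n, there holds ∑_{k=1}^{n} (-1)^{k-1} q^{k(k+1)/2 - rk} (1 - q^{2rk}) / ((q;q)_k (q;q)_{n-k} (q^k; q)_{n+1}) = r / (q;q)_n^2, as an identity of rational functions in q. -/

import Mathlib

/-!
Let `F(s) = halfSum q n s`, i.e.
  `F(s) = ∑_{k=1}^n (-1)^(k-1) q^(C(k+1,2) - s k) / ((1 - q^k) (q;q)_{n-k} (q;q)_{n+k})`.
Since `(q;q)_k (q^k;q)_{n+1} = (1 - q^k) (q;q)_{n+k}`, the sum in question is `D(r) = F(r) - F(-r)`,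
so `D` is odd and `D(0) = 0`. In `F(s+1) - F(s)` the factor `1 - q^k` cancels, and for `0 ≤ m < n`
the two differences making up `D(m+1) - D(m)` are the halves `j = n ± k` of the finite
q-binomial theorem
  `∑_{j=0}^{2n} (-1)^j q^C(j,2) x^j / ((q;q)_j (q;q)_{2n-j}) = (x;q)_{2n} / (q;q)_{2n}`
at `x = q^(-(n+m))`, where the right side vanishes; the central term `j = n` is `1/(q;q)_n^2`.
Hence `D(m) = m / (q;q)_n^2` for `0 ≤ m ≤ n`.
-/

/-- The q-Pochhammer symbol `(a;q)_n = ∏_{j=0}^{n-1} (1 - a q^j)`. -/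
noncomputable def qPoch (a q : ℂ) (n : ℕ) : ℂ := ∏ j ∈ Finset.range n, (1 - a * q ^ j)

open Finset

lemma sum_range_two_mul_add_one {M : Type*} [AddCommMonoid M] (f : ℕ → M) (n : ℕ) :
    ∑ j ∈ range (2 * n + 1), f j = f n + ∑ k ∈ Icc 1 n, (f (n + k) + f (n - k)) := by
  have hIcc (g : ℕ → M) : ∑ k ∈ Icc 1 n, g k = ∑ i ∈ range n, g (i + 1) := by
    rw [← Ico_add_one_right_eq_Icc, sum_Ico_eq_sum_range, Nat.add_sub_cancel]
    simp only [add_comm 1]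
  rw [two_mul, add_assoc, sum_range_add, sum_range_succ', ← sum_range_reflect, sum_add_distrib,
    hIcc, hIcc, add_zero]
  simp only [Nat.sub_sub, add_comm 1]
  abel

section QBinomial

variable {R : Type*} [CommRing R] (q : R)

def qBinom : ℕ → ℕ → R
  | _, 0 => 1
  | 0, _ + 1 => 0
  | n + 1, k + 1 => qBinom n k + q ^ (k + 1) * qBinom n (k + 1)

@[simp] lemma qBinom_zero_right (n : ℕ) : qBinom q n 0 = 1 := by cases n <;> rfl

lemma qBinom_succ_succ (n k : ℕ) :
    qBinom q (n + 1) (k + 1) = qBinom q n k + q ^ (k + 1) * qBinom q n (k + 1) := rfl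

lemma qBinom_eq_zero_of_lt : ∀ {n k : ℕ}, n < k → qBinom q n k = 0
  | 0, _ + 1, _ => rfl
  | n + 1, k + 1, h => by
    rw [qBinom_succ_succ, qBinom_eq_zero_of_lt (by omega), qBinom_eq_zero_of_lt (by omega),
      mul_zero, add_zero]

lemma sum_qBinom_succ (M : ℕ) (x : R) :
    ∑ j ∈ range (M + 2), (-1) ^ j * q ^ j.choose 2 * qBinom q (M + 1) j * x ^ j =
      (1 - x) * ∑ j ∈ range (M + 1), (-1) ^ j * q ^ j.choose 2 * qBinom q M j * (q * x) ^ j := by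
  set b : ℕ → R := fun j => (-1) ^ j * q ^ j.choose 2 * qBinom q M j * (q * x) ^ j with hb
  have hchoose (j : ℕ) : (j + 1).choose 2 = j.choose 2 + j := by
    rw [Nat.choose_succ_succ, Nat.choose_one_right, add_comm]
  have hlast : b (M + 1) = 0 := by simp [hb, qBinom_eq_zero_of_lt q (Nat.lt_succ_self M)]
  calc _ = ∑ j ∈ range (M + 1), (b (j + 1) - x * b j) + b 0 := by
        rw [sum_range_succ']
        congr 1
        · refine sum_congr rfl fun j _ => ?_
          simp only [hb, qBinom_succ_succ, hchoose]
          ring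
        · simp [hb]
    _ = (∑ j ∈ range (M + 2), b j) - x * ∑ j ∈ range (M + 1), b j := by
        rw [sum_sub_distrib, ← mul_sum, sum_range_succ' b (M + 1)]
        ring
    _ = (1 - x) * ∑ j ∈ range (M + 1), b j := by
        rw [sum_range_succ, hlast]
        ring

theorem sum_qBinom_mul_pow (M : ℕ) (x : R) :
    ∑ j ∈ range (M + 1), (-1) ^ j * q ^ j.choose 2 * qBinom q M j * x ^ j =
      ∏ i ∈ range M, (1 - x * q ^ i) := by
  induction M generalizing x with
  | zero => simp
  | succ M ih =>
    rw [sum_qBinom_succ, ih, prod_range_succ', pow_zero, mul_one, mul_comm]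
    congr 1
    exact prod_congr rfl fun i _ => by ring

end QBinomial

section QPochhammer

variable (a q : ℂ)

@[simp] lemma qPoch_zero : qPoch a q 0 = 1 := prod_range_zero _

lemma qPoch_succ (n : ℕ) : qPoch a q (n + 1) = qPoch a q n * (1 - a * q ^ n) :=
  prod_range_succ _ n

lemma qPoch_succ' (n : ℕ) : qPoch a q (n + 1) = (1 - a) * qPoch (a * q) q n := by
  rw [qPoch, prod_range_succ', pow_zero, mul_one, mul_comm, qPoch]
  exact congrArg _ (prod_congr rfl fun j _ => by ring)

lemma qPoch_add (m n : ℕ) : qPoch a q (m + n) = qPoch a q m * qPoch (a * q ^ m) q n := by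
  rw [qPoch, prod_range_add, qPoch, qPoch]
  exact congrArg _ (prod_congr rfl fun j _ => by ring)

lemma qPoch_mul_qPoch_pow (k n : ℕ) :
    qPoch q q k * qPoch (q ^ k) q (n + 1) = (1 - q ^ k) * qPoch q q (k + n) := by
  rw [qPoch_succ', qPoch_add, ← pow_succ, pow_succ']
  ring

lemma qPoch_self_ne_zero {q : ℂ} (hq : ∀ j, 1 ≤ j → q ^ j ≠ 1) (n : ℕ) : qPoch q q n ≠ 0 :=
  prod_ne_zero_iff.mpr fun j _ h => hq (j + 1) (by omega) (by rw [pow_succ']; linear_combination -h)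

lemma qPoch_zpow_neg_eq_zero {q : ℂ} (hq : q ≠ 0) {i N : ℕ} (hi : i < N) :
    qPoch (q ^ (-(i : ℤ))) q N = 0 :=
  prod_eq_zero (mem_range.mpr hi)
    (by rw [← zpow_natCast, ← zpow_add₀ hq, neg_add_cancel, zpow_zero, sub_self])

lemma qBinom_mul_qPoch_mul_qPoch : ∀ {n k : ℕ}, k ≤ n →
    qBinom q n k * qPoch q q k * qPoch q q (n - k) = qPoch q q n
  | n, 0, _ => by simp
  | n + 1, k + 1, hk => by
    have h₁ := qBinom_mul_qPoch_mul_qPoch (Nat.le_of_succ_le_succ hk)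
    have h₂ : q ^ (k + 1) * qBinom q n (k + 1) * qPoch q q (k + 1) * qPoch q q (n - k) =
        q ^ (k + 1) * qPoch q q n * (1 - q ^ (n - k)) := by
      obtain ⟨d, rfl⟩ | rfl : (∃ d, n = k + 1 + d) ∨ n = k :=
        (Nat.le_of_succ_le_succ hk).lt_or_eq.imp (fun h => ⟨n - (k + 1), by omega⟩) Eq.symm
      · rw [← qBinom_mul_qPoch_mul_qPoch (Nat.le_add_right _ d),
          show k + 1 + d - k = d + 1 by omega, Nat.add_sub_cancel_left, qPoch_succ q q d, pow_succ' q d]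
        ring
      · simp [qBinom_eq_zero_of_lt]
    have hpow : q ^ (k + 1) * q ^ (n - k) = q ^ (n + 1) := by
      rw [← pow_add]; congr 1; omega
    rw [qBinom_succ_succ, Nat.succ_sub_succ, qPoch_succ q q n]
    linear_combination (1 - q ^ (k + 1)) * h₁ + h₂ - qPoch q q n * hpow +
      qBinom q n k * qPoch q q (n - k) * qPoch_succ q q k

end QPochhammer

theorem sum_div_qPoch_mul_qPoch {q : ℂ} (hq : ∀ j, 1 ≤ j → q ^ j ≠ 1) (M : ℕ) (x : ℂ) :
    ∑ j ∈ range (M + 1), (-1) ^ j * q ^ j.choose 2 * x ^ j / (qPoch q q j * qPoch q q (M - j)) =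
      qPoch x q M / qPoch q q M := by
  have hRothe : qPoch x q M = _ := (sum_qBinom_mul_pow q M x).symm
  rw [eq_div_iff (qPoch_self_ne_zero hq M), Finset.sum_mul, hRothe]
  refine sum_congr rfl fun j hj => ?_
  rw [← qBinom_mul_qPoch_mul_qPoch q (Nat.lt_succ_iff.mp (mem_range.mp hj))]
  have := qPoch_self_ne_zero hq j
  have := qPoch_self_ne_zero hq (M - j)
  field_simp

lemma sum_zpow_div_qPoch_mul_qPoch_eq_zero {q : ℂ} (hq0 : q ≠ 0) (hq : ∀ j, 1 ≤ j → q ^ j ≠ 1)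
    {i M : ℕ} (hi : i < M) :
    ∑ j ∈ range (M + 1), (-1) ^ j * q ^ ((j.choose 2 : ℕ) - (i : ℤ) * j) /
      (qPoch q q j * qPoch q q (M - j)) = 0 := by
  have hterm (j : ℕ) :
      q ^ ((j.choose 2 : ℕ) - (i : ℤ) * j) = q ^ j.choose 2 * (q ^ (-(i : ℤ))) ^ j := by
    rw [sub_eq_add_neg, zpow_add₀ hq0, zpow_natCast, ← zpow_natCast (q ^ _), ← zpow_mul, neg_mul]
  simp only [hterm, ← mul_assoc]
  rw [sum_div_qPoch_mul_qPoch hq, qPoch_zpow_neg_eq_zero hq0 hi, zero_div]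

section HalfSums

variable (q : ℂ) (n : ℕ)

noncomputable def halfSum (s : ℤ) : ℂ :=
  ∑ k ∈ Icc 1 n, (-1) ^ (k - 1) * q ^ (((k + 1).choose 2 : ℕ) - s * k : ℤ) /
    ((1 - q ^ k) * qPoch q q (n - k) * qPoch q q (n + k))

noncomputable def halfSumDiff (s : ℤ) : ℂ :=
  ∑ k ∈ Icc 1 n, (-1) ^ (k - 1) * q ^ (((k + 1).choose 2 : ℕ) - s * k : ℤ) /
    (qPoch q q (n - k) * qPoch q q (n + k))

variable {q}

lemma halfSum_add_one_sub (hq0 : q ≠ 0) (hq : ∀ j, 1 ≤ j → q ^ j ≠ 1) (s : ℤ) :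
    halfSum q n (s + 1) - halfSum q n s = halfSumDiff q n (s + 1) := by
  rw [halfSum, halfSum, halfSumDiff, ← sum_sub_distrib]
  refine sum_congr rfl fun k hk => ?_
  have hk0 : 1 - q ^ k ≠ 0 := sub_ne_zero.mpr (hq k (mem_Icc.mp hk).1).symm
  have hshift : q ^ (((k + 1).choose 2 : ℕ) - s * k : ℤ) =
      q ^ k * q ^ (((k + 1).choose 2 : ℕ) - (s + 1) * k : ℤ) := by
    rw [← zpow_natCast q k, ← zpow_add₀ hq0]
    ring_nf
  have := qPoch_self_ne_zero hq (n - k)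
  have := qPoch_self_ne_zero hq (n + k)
  rw [hshift]
  field_simp

lemma halfSumDiff_add_halfSumDiff (hq0 : q ≠ 0) (hq : ∀ j, 1 ≤ j → q ^ j ≠ 1) {m : ℕ}
    (hm : m < n) : halfSumDiff q n (m + 1) + halfSumDiff q n (-m) = 1 / qPoch q q n ^ 2 := by
  set f : ℕ → ℂ := fun j => (-1) ^ j * q ^ ((j.choose 2 : ℕ) - ((n + m : ℕ) : ℤ) * j) /
    (qPoch q q j * qPoch q q (2 * n - j)) with hf
  set e : ℤ := (n.choose 2 : ℕ) - ((n + m : ℕ) : ℤ) * n with he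
  set c : ℂ := (-1) ^ n * q ^ e with hc
  have hc0 : c ≠ 0 := mul_ne_zero (pow_ne_zero _ (neg_ne_zero.mpr one_ne_zero)) (zpow_ne_zero _ hq0)
  have hvanish : ∑ j ∈ range (2 * n + 1), f j = 0 :=
    sum_zpow_div_qPoch_mul_qPoch_eq_zero hq0 hq (by omega)
  have hcenter : f n = c / qPoch q q n ^ 2 := by
    simp only [hf, hc, he, two_mul, Nat.add_sub_cancel, sq]
  have hpair : ∀ k ∈ Icc 1 n, f (n + k) + f (n - k) = -c *
      ((-1) ^ (k - 1) * q ^ (((k + 1).choose 2 : ℕ) - ((m : ℤ) + 1) * k : ℤ) /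
          (qPoch q q (n - k) * qPoch q q (n + k)) +
        (-1) ^ (k - 1) * q ^ (((k + 1).choose 2 : ℕ) - (-(m : ℤ)) * k : ℤ) /
          (qPoch q q (n - k) * qPoch q q (n + k))) := by
    intro k hk
    obtain ⟨hk1, hkn⟩ := mem_Icc.mp hk
    have hexp₁ : (((n + k).choose 2 : ℕ) : ℤ) - ((n + m : ℕ) : ℤ) * ((n + k : ℕ) : ℤ) =
        e + (((k + 1).choose 2 : ℕ) - ((m : ℤ) + 1) * k) := by
      rw [he]; qify; push_cast [Nat.cast_choose_two]; ring
    have hexp₂ : (((n - k).choose 2 : ℕ) : ℤ) - ((n + m : ℕ) : ℤ) * ((n - k : ℕ) : ℤ) =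
        e + (((k + 1).choose 2 : ℕ) - (-(m : ℤ)) * k) := by
      rw [he]; qify [hkn]; push_cast [Nat.cast_choose_two, Nat.cast_sub hkn]; ring
    have hsign₁ : (-1 : ℂ) ^ (n + k) = -((-1) ^ n * (-1) ^ (k - 1)) := by
      rw [show n + k = n + (k - 1) + 1 by omega, pow_succ, pow_add]
      ring
    have hsign₂ : (-1 : ℂ) ^ (n - k) = -((-1) ^ n * (-1) ^ (k - 1)) := by
      rw [← hsign₁, show n + k = n - k + 2 * k by omega, pow_add, pow_mul, neg_one_sq, one_pow,
        mul_one]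
    simp only [hf, hc, hexp₁, hexp₂, zpow_add₀ hq0, hsign₁, hsign₂,
      show 2 * n - (n + k) = n - k by omega, show 2 * n - (n - k) = n + k by omega]
    ring
  rw [sum_range_two_mul_add_one, hcenter, sum_congr rfl hpair, ← mul_sum, sum_add_distrib,
    ← halfSumDiff, ← halfSumDiff] at hvanish
  have hfactor :
      c * (1 / qPoch q q n ^ 2 - (halfSumDiff q n (m + 1) + halfSumDiff q n (-m))) = 0 := by
    linear_combination hvanish
  exact (sub_eq_zero.mp ((mul_eq_zero.mp hfactor).resolve_left hc0)).symm

lemma halfSum_sub_halfSum_neg (hq0 : q ≠ 0) (hq : ∀ j, 1 ≤ j → q ^ j ≠ 1) {m : ℕ} (hm : m ≤ n) :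
    halfSum q n m - halfSum q n (-m) = m / qPoch q q n ^ 2 := by
  induction m with
  | zero => simp
  | succ m ih =>
    have hup := halfSum_add_one_sub n hq0 hq m
    have hdown := halfSum_add_one_sub n hq0 hq (-(m + 1))
    rw [show -((m : ℤ) + 1) + 1 = -m by ring] at hdown
    push_cast
    linear_combination hup + hdown + ih (by omega) +
      halfSumDiff_add_halfSumDiff n hq0 hq (m := m) (by omega)

lemma sum_eq_halfSum_sub_halfSum_neg (hq0 : q ≠ 0) (r : ℤ) :
    ∑ k ∈ Finset.Icc 1 n,
        (-1 : ℂ) ^ (k - 1) * q ^ (((k * (k + 1) / 2 : ℕ) : ℤ) - r * k) *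
          (1 - q ^ (2 * r * (k : ℤ))) /
          (qPoch q q k * qPoch q q (n - k) * qPoch (q ^ k) q (n + 1)) =
      halfSum q n r - halfSum q n (-r) := by
  rw [halfSum, halfSum, ← sum_sub_distrib]
  refine sum_congr rfl fun k _ => ?_
  have htri : k * (k + 1) / 2 = (k + 1).choose 2 := by
    rw [Nat.choose_two_right, Nat.add_sub_cancel, mul_comm]
  have hnum : q ^ (((k + 1).choose 2 : ℕ) - r * k : ℤ) * (1 - q ^ (2 * r * (k : ℤ))) =
      q ^ (((k + 1).choose 2 : ℕ) - r * k : ℤ) - q ^ (((k + 1).choose 2 : ℕ) - -r * k : ℤ) := by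
    rw [mul_sub, mul_one, ← zpow_add₀ hq0]
    ring_nf
  have hden : qPoch q q k * qPoch q q (n - k) * qPoch (q ^ k) q (n + 1) =
      (1 - q ^ k) * qPoch q q (n - k) * qPoch q q (n + k) := by
    rw [mul_right_comm, qPoch_mul_qPoch_pow, add_comm k n]
    ring
  rw [htri, mul_assoc _ (q ^ _), hnum, hden, ← sub_div, mul_sub]

end HalfSums

/-- The `m = n`, `p = q` specialization. -/
theorem stmt5 (n : ℕ) (r : ℤ) (hr : |r| ≤ (n : ℤ)) (q : ℂ) (hq : q ≠ 0)
    (hq1 : ∀ j, 1 ≤ j → q ^ j ≠ 1) :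
    ∑ k ∈ Finset.Icc 1 n,
        (-1 : ℂ) ^ (k - 1) * q ^ (((k * (k + 1) / 2 : ℕ) : ℤ) - r * k) *
          (1 - q ^ (2 * r * (k : ℤ))) /
          (qPoch q q k * qPoch q q (n - k) * qPoch (q ^ k) q (n + 1))
      = (r : ℂ) / (qPoch q q n) ^ 2 := by
  rw [sum_eq_halfSum_sub_halfSum_neg n hq]
  obtain ⟨m, rfl | rfl⟩ := Int.eq_nat_or_neg r
  · exact_mod_cast halfSum_sub_halfSum_neg n hq hq1 (m := m) (by simpa using hr)
  · rw [neg_neg, ← neg_sub, halfSum_sub_halfSum_neg n hq hq1 (by simpa using hr)]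
    push_cast
    ring
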